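/- arXiv:0809.2018 — 2 statements merged into one kernel-verified Lean document; each statement's English description precedes it below -/
import Mathlib

section
/- The coefficients b^k_{ij} form a tensor of type (1,2) on the submanifold: if φ : V → U is a smooth diffeomorphism between open subsets of ℝ^N with inverse ψ = φ^{-1}, and b'^k_{ij} are the coefficients in the Gauss decomposition of the reparametrized pair (r∘φ, n∘φ), then b'^k_{ij}(v) = Σ_{m,p,q} (∂ψ^k/∂u^m)(φ(v)) (∂φ^p/∂v^i)(v) (∂φ^q/∂v^j)(v) b^m_{pq}(φ(v)) for all v ∈ V. -/
/-- Partial derivative in the `i`-th coordinate direction. -/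
noncomputable def pd {N : ℕ} {E : Type*} [NormedAddCommGroup E] [NormedSpace ℝ E]
    (i : Fin N) (f : (Fin N → ℝ) → E) (u : Fin N → ℝ) : E :=
  fderiv ℝ f u (Pi.single i 1)

/-- The pseudo-Euclidean scalar product `B(x,y) = xᵀ G y` on `ℝ^m`. -/
def Bform {m : ℕ} (G : Matrix (Fin m) (Fin m) ℝ) (x y : Fin m → ℝ) : ℝ :=
  ∑ i, ∑ j, x i * G i j * y j

lemma clm_pi_eq {N : ℕ} {E : Type*} [NormedAddCommGroup E] [NormedSpace ℝ E]
    (L : (Fin N → ℝ) →L[ℝ] E) (x : Fin N → ℝ) :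
    L x = ∑ p, x p • L (Pi.single p 1) := by
  have hx : x = ∑ p, x p • (Pi.single p 1 : Fin N → ℝ) := by
    funext j
    simp [Finset.sum_apply, Pi.single_apply, Finset.sum_ite_eq']
  conv_lhs => rw [hx]
  simp [map_sum]

lemma pd_comp {N M : ℕ} {E : Type*} [NormedAddCommGroup E] [NormedSpace ℝ E]
    {f : (Fin M → ℝ) → E} {φ : (Fin N → ℝ) → (Fin M → ℝ)} {v : Fin N → ℝ}
    (hf : DifferentiableAt ℝ f (φ v)) (hφ : DifferentiableAt ℝ φ v) (i : Fin N) :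
    pd i (fun w => f (φ w)) v = ∑ p, pd i φ v p • pd p f (φ v) := by
  unfold pd
  rw [show (fun w => f (φ w)) = f ∘ φ from rfl, fderiv_comp v hf hφ,
    ContinuousLinearMap.comp_apply,
    clm_pi_eq (fderiv ℝ f (φ v)) (fderiv ℝ φ v (Pi.single i 1))]

lemma pd_contDiffOn {N : ℕ} {M : ℕ} {f : (Fin N → ℝ) → (Fin M → ℝ)} {s : Set (Fin N → ℝ)}
    (hf : ContDiffOn ℝ (⊤ : ℕ∞) f s) (hs : IsOpen s) (i : Fin N) :
    ContDiffOn ℝ (⊤ : ℕ∞) (pd i f) s := by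
  have h : ContDiffOn ℝ ((⊤ : ℕ∞) + 1 : WithTop ℕ∞) f s := hf.of_le (by simp)
  have h2 := h.fderiv_of_isOpen hs (le_refl _)
  exact h2.clm_apply contDiffOn_const

lemma pd_sum {N M : ℕ} {E : Type*} [NormedAddCommGroup E] [NormedSpace ℝ E]
    {F : Fin M → (Fin N → ℝ) → E} {v : Fin N → ℝ}
    (h : ∀ q, DifferentiableAt ℝ (F q) v) (i : Fin N) :
    pd i (fun w => ∑ q, F q w) v = ∑ q, pd i (F q) v := by
  unfold pd
  rw [fderiv_fun_sum fun q _ => h q]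
  simp

lemma pd_smul {N : ℕ} {E : Type*} [NormedAddCommGroup E] [NormedSpace ℝ E]
    {c : (Fin N → ℝ) → ℝ} {g : (Fin N → ℝ) → E} {v : Fin N → ℝ}
    (hc : DifferentiableAt ℝ c v) (hg : DifferentiableAt ℝ g v) (i : Fin N) :
    pd i (fun w => c w • g w) v = pd i c v • g v + c v • pd i g v := by
  unfold pd
  rw [fderiv_fun_smul hc hg]
  simp [add_comm]

lemma pd_congr {N : ℕ} {E : Type*} [NormedAddCommGroup E] [NormedSpace ℝ E]
    {f g : (Fin N → ℝ) → E} {v : Fin N → ℝ} (h : f =ᶠ[nhds v] g) (i : Fin N) :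
    pd i f v = pd i g v := by
  unfold pd
  rw [h.fderiv_eq]

lemma swapE {E : Type*} [AddCommMonoid E] {Nn : ℕ} (f : Fin Nn → Fin Nn → Fin Nn → E) :
    ∑ m, ∑ q, ∑ p, f m q p = ∑ q, ∑ p, ∑ m, f m q p := by
  rw [Finset.sum_comm]
  exact Finset.sum_congr rfl fun q _ => Finset.sum_comm

lemma collectL {E : Type*} [AddCommGroup E] [Module ℝ E] {Nn : ℕ}
    (c d e : Fin Nn → ℝ) (a b : Fin Nn → Fin Nn → Fin Nn → ℝ) (R Nv : Fin Nn → E) :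
    ∑ q, (c q • R q + d q • ∑ p, e p • ((∑ m, a p q m • R m) + ∑ m, b p q m • Nv m))
      = ∑ m, (c m + ∑ q, ∑ p, d q * e p * a p q m) • R m
        + ∑ m, (∑ q, ∑ p, d q * e p * b p q m) • Nv m := by
  simp only [smul_add, Finset.smul_sum, smul_smul, add_smul, Finset.sum_add_distrib,
    Finset.sum_smul, mul_assoc]
  rw [swapE (fun m q p => (d q * (e p * a p q m)) • R m),
      swapE (fun m q p => (d q * (e p * b p q m)) • Nv m)]
  abel

lemma collectR {E : Type*} [AddCommGroup E] [Module ℝ E] {Nn : ℕ}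
    (a' b' : Fin Nn → ℝ) (J : Fin Nn → Fin Nn → ℝ) (R Nv : Fin Nn → E) :
    (∑ k, a' k • ∑ m, J k m • R m) + ∑ k, b' k • ∑ m, J k m • Nv m
      = ∑ m, (∑ k, a' k * J k m) • R m + ∑ m, (∑ k, b' k * J k m) • Nv m := by
  simp only [Finset.smul_sum, smul_smul, Finset.sum_smul]
  congr 1 <;> rw [Finset.sum_comm]

/-- `X^k_{ij}` is written `X i j k`. -/
theorem stmt6
    (N : ℕ) (hN : 1 ≤ N)
    (G : Matrix (Fin (2 * N)) (Fin (2 * N)) ℝ)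
    (hGsymm : G.transpose = G) (hGdet : G.det ≠ 0)
    (U V : Set (Fin N → ℝ)) (hU : IsOpen U) (hV : IsOpen V)
    (r n : (Fin N → ℝ) → (Fin (2 * N) → ℝ))
    (hr : ContDiffOn ℝ (⊤ : ℕ∞) r U) (hn : ContDiffOn ℝ (⊤ : ℕ∞) n U)
    (hbasis : ∀ u ∈ U,
      LinearIndependent ℝ (Sum.elim (fun i : Fin N => pd i r u) (fun j : Fin N => pd j n u)) ∧
      Submodule.span ℝ
        (Set.range (Sum.elim (fun i : Fin N => pd i r u) (fun j : Fin N => pd j n u))) = ⊤)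
    (horth : ∀ u ∈ U, ∀ i j : Fin N, Bform G (pd i r u) (pd j n u) = 0)
    -- Gauss decomposition on U
    (a b : Fin N → Fin N → Fin N → (Fin N → ℝ) → ℝ)
    (hGauss : ∀ u ∈ U, ∀ i j : Fin N,
      pd i (pd j r) u =
        (∑ k, a i j k u • pd k r u) + ∑ k, b i j k u • pd k n u)
    -- φ : V → U is a smooth diffeomorphism with smooth inverse ψ
    (φ ψ : (Fin N → ℝ) → (Fin N → ℝ))
    (hφ : ContDiffOn ℝ (⊤ : ℕ∞) φ V) (hψ : ContDiffOn ℝ (⊤ : ℕ∞) ψ U)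
    (hφV : Set.MapsTo φ V U) (hψU : Set.MapsTo ψ U V)
    (hleft : ∀ v ∈ V, ψ (φ v) = v) (hright : ∀ u ∈ U, φ (ψ u) = u)
    -- Gauss decomposition of the reparametrized pair (r ∘ φ, n ∘ φ) on V
    (a' b' : Fin N → Fin N → Fin N → (Fin N → ℝ) → ℝ)
    (hGauss' : ∀ v ∈ V, ∀ i j : Fin N,
      pd i (pd j (r ∘ φ)) v =
        (∑ k, a' i j k v • pd k (r ∘ φ) v) + ∑ k, b' i j k v • pd k (n ∘ φ) v) :
    ∀ v ∈ V, ∀ i j k : Fin N,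
      b' i j k v =
        ∑ m, ∑ p, ∑ q,
          pd m ψ (φ v) k * pd i φ v p * pd j φ v q * b p q m (φ v) := by
  intro v hv i j k
  have hu : φ v ∈ U := hφV hv
  -- differentiability facts
  have hφd : ∀ w ∈ V, DifferentiableAt ℝ φ w := fun w hw =>
    (hφ.differentiableOn (by simp)).differentiableAt (hV.mem_nhds hw)
  have hψd : ∀ w ∈ U, DifferentiableAt ℝ ψ w := fun w hw =>
    (hψ.differentiableOn (by simp)).differentiableAt (hU.mem_nhds hw)
  have hrd : ∀ w ∈ U, DifferentiableAt ℝ r w := fun w hw =>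
    (hr.differentiableOn (by simp)).differentiableAt (hU.mem_nhds hw)
  have hnd : ∀ w ∈ U, DifferentiableAt ℝ n w := fun w hw =>
    (hn.differentiableOn (by simp)).differentiableAt (hU.mem_nhds hw)
  have hpdφd : ∀ l : Fin N, DifferentiableAt ℝ (pd l φ) v := fun l =>
    ((pd_contDiffOn hφ hV l).differentiableOn (by simp)).differentiableAt (hV.mem_nhds hv)
  have hpdrd : ∀ q : Fin N, DifferentiableAt ℝ (pd q r) (φ v) := fun q =>
    ((pd_contDiffOn hr hU q).differentiableOn (by simp)).differentiableAt (hU.mem_nhds hu)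
  -- first-order chain rules
  have chainr : ∀ (l : Fin N), ∀ w ∈ V, pd l (r ∘ φ) w = ∑ p, pd l φ w p • pd p r (φ w) :=
    fun l w hw => pd_comp (hrd _ (hφV hw)) (hφd w hw) l
  have chainn : ∀ l : Fin N, pd l (n ∘ φ) v = ∑ p, pd l φ v p • pd p n (φ v) :=
    fun l => pd_comp (hnd _ hu) (hφd v hv) l
  -- second-order chain rule
  have hev : (pd j (r ∘ φ)) =ᶠ[nhds v] (fun w => ∑ q, pd j φ w q • pd q r (φ w)) := by
    filter_upwards [hV.mem_nhds hv] with w hw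
    exact chainr j w hw
  have hdiffF : ∀ q : Fin N, DifferentiableAt ℝ (fun w => pd j φ w q • pd q r (φ w)) v :=
    fun q => ((differentiableAt_pi.mp (hpdφd j)) q).smul ((hpdrd q).comp v (hφd v hv))
  have step : pd i (pd j (r ∘ φ)) v
      = ∑ q, (pd i (fun w => pd j φ w q) v • pd q r (φ v)
          + pd j φ v q • ∑ p, pd i φ v p • pd p (pd q r) (φ v)) := by
    rw [pd_congr hev i, pd_sum hdiffF i]
    refine Finset.sum_congr rfl fun q _ => ?_
    rw [pd_smul (c := fun w => pd j φ w q) (g := fun w => pd q r (φ w))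
        ((differentiableAt_pi.mp (hpdφd j)) q) ((hpdrd q).comp v (hφd v hv)) i,
      pd_comp (hpdrd q) (hφd v hv) i]
  -- expansion of lhs in the basis
  have EqL : pd i (pd j (r ∘ φ)) v
      = ∑ m, (pd i (fun w => pd j φ w m) v
            + ∑ q, ∑ p, pd j φ v q * pd i φ v p * a p q m (φ v)) • pd m r (φ v)
        + ∑ m, (∑ q, ∑ p, pd j φ v q * pd i φ v p * b p q m (φ v)) • pd m n (φ v) := by
    rw [step]
    simp only [hGauss (φ v) hu]
    exact collectL (fun q => pd i (fun w => pd j φ w q) v) (fun q => pd j φ v q)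
      (fun p => pd i φ v p) (fun p q m => a p q m (φ v)) (fun p q m => b p q m (φ v))
      (fun m => pd m r (φ v)) (fun m => pd m n (φ v))
  -- expansion of rhs in the basis
  have EqR : pd i (pd j (r ∘ φ)) v
      = ∑ m, (∑ k', a' i j k' v * pd k' φ v m) • pd m r (φ v)
        + ∑ m, (∑ k', b' i j k' v * pd k' φ v m) • pd m n (φ v) := by
    rw [hGauss' v hv i j]
    have h1 : ∀ k' : Fin N, pd k' (r ∘ φ) v = ∑ m, pd k' φ v m • pd m r (φ v) :=
      fun k' => chainr k' v hv
    simp only [h1, chainn]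
    exact collectR (fun k' => a' i j k' v) (fun k' => b' i j k' v)
      (fun k' m => pd k' φ v m) (fun m => pd m r (φ v)) (fun m => pd m n (φ v))
  -- equate coefficients via linear independence
  obtain ⟨hli, -⟩ := hbasis (φ v) hu
  set A : Fin N → ℝ := fun m => pd i (fun w => pd j φ w m) v
      + ∑ q, ∑ p, pd j φ v q * pd i φ v p * a p q m (φ v) with hA
  set B : Fin N → ℝ := fun m => ∑ q, ∑ p, pd j φ v q * pd i φ v p * b p q m (φ v) with hBdef
  set A' : Fin N → ℝ := fun m => ∑ k', a' i j k' v * pd k' φ v m with hA'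
  set B' : Fin N → ℝ := fun m => ∑ k', b' i j k' v * pd k' φ v m with hB'
  have hsum : ∑ s : Fin N ⊕ Fin N,
      (Sum.elim (fun m => A m - A' m) (fun m => B m - B' m)) s •
        (Sum.elim (fun m => pd m r (φ v)) (fun m => pd m n (φ v))) s = 0 := by
    rw [Fintype.sum_sum_type]
    simp only [Sum.elim_inl, Sum.elim_inr, sub_smul, Finset.sum_sub_distrib]
    rw [sub_add_sub_comm, sub_eq_zero]
    exact EqL.symm.trans EqR
  have hz := Fintype.linearIndependent_iff.mp hli
    (Sum.elim (fun m => A m - A' m) (fun m => B m - B' m)) hsum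
  have hB : ∀ m, B m = B' m := fun m => sub_eq_zero.mp (hz (Sum.inr m))
  -- Jacobian inverse identity
  have hJ : ∀ k1 k2 : Fin N, ∑ m, pd k2 φ v m * pd m ψ (φ v) k1
      = if k1 = k2 then 1 else 0 := by
    intro k1 k2
    have hcomp : pd k2 (fun w => ψ (φ w)) v = ∑ m, pd k2 φ v m • pd m ψ (φ v) :=
      pd_comp (hψd _ hu) (hφd v hv) k2
    have hid : pd k2 (fun w => ψ (φ w)) v = Pi.single k2 1 := by
      have hid2 : (fun w => ψ (φ w)) =ᶠ[nhds v] id := by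
        filter_upwards [hV.mem_nhds hv] with w hw
        exact hleft w hw
      rw [pd_congr hid2 k2]
      unfold pd
      rw [fderiv_id]
      rfl
    have hc := congrFun (hcomp.symm.trans hid) k1
    simpa [Finset.sum_apply, Pi.single_apply] using hc
  -- conclude
  have final : ∑ m, pd m ψ (φ v) k * B' m = b' i j k v := by
    calc ∑ m, pd m ψ (φ v) k * B' m
        = ∑ k', (∑ m, pd k' φ v m * pd m ψ (φ v) k) * b' i j k' v := by
          simp only [hB', Finset.mul_sum, Finset.sum_mul]
          rw [Finset.sum_comm]
          exact Finset.sum_congr rfl fun k' _ => Finset.sum_congr rfl fun m _ => by ring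
      _ = ∑ k', (if k = k' then 1 else 0) * b' i j k' v := by
          simp only [hJ]
      _ = b' i j k v := by
          simp [ite_mul]
  rw [← final]
  have hBB : ∀ m, B' m = B m := fun m => (hB m).symm
  simp only [hBB, hBdef, Finset.mul_sum]
  refine Finset.sum_congr rfl fun m _ => ?_
  rw [Finset.sum_comm]
  exact Finset.sum_congr rfl fun p _ => Finset.sum_congr rfl fun q _ => by ring
end

section
/- (Flat case: symmetry conditions ensuring existence of a potential Φ.) Under the setup of a submanifold with potential of normals with h_{ij}(u) = η_{ij} constant invertible symmetric and g_{ij}(u) = c₀ η_{ij}, c₀ ≠ 0 constant, define the lowered tensor b_{ijk}(u) = Σ_s η_{ks} b^s_{ij}(u). Then b_{ijk} is totally symmetric in all three indices i,j,k, and its first partial derivatives ∂b_{ijk}/∂u^l are totally symmetric in all four indices i,j,k,l, for all u ∈ U (these are the integrability conditions yielding, locally, a function Φ with b_{ijk} = ∂³Φ/∂u^i∂u^j∂u^k). -/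
section helpers

variable {N : ℕ} {E : Type*} [NormedAddCommGroup E] [NormedSpace ℝ E]
  {U : Set (Fin N → ℝ)} {f g : (Fin N → ℝ) → E} {u : Fin N → ℝ}

lemma pd_congrU (hU : IsOpen U) (h : ∀ v ∈ U, f v = g v) (hu : u ∈ U) (l : Fin N) :
    pd l f u = pd l g u := by
  unfold pd
  rw [Filter.EventuallyEq.fderiv_eq (Filter.eventuallyEq_of_mem (hU.mem_nhds hu) h)]

lemma pd_constU (hU : IsOpen U) {c : E} (h : ∀ v ∈ U, f v = c) (hu : u ∈ U) (l : Fin N) :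
    pd l f u = 0 := by
  rw [pd_congrU hU h hu l]
  simp [pd]

lemma contDiffOn_pd (hU : IsOpen U) (hf : ContDiffOn ℝ (⊤ : ℕ∞) f U) (i : Fin N) :
    ContDiffOn ℝ (⊤ : ℕ∞) (pd i f) U := by
  have h1 : ContDiffOn ℝ (⊤ : ℕ∞) (fderiv ℝ f) U := hf.fderiv_of_isOpen hU (by simp)
  exact (ContinuousLinearMap.apply ℝ E (Pi.single i (1:ℝ))).contDiff.comp_contDiffOn h1

lemma diffAt_of_cdU (hU : IsOpen U) (hf : ContDiffOn ℝ (⊤ : ℕ∞) f U) (hu : u ∈ U) :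
    DifferentiableAt ℝ f u :=
  ((hf.differentiableOn (by simp)).differentiableAt (hU.mem_nhds hu))

lemma pd_comm (hU : IsOpen U) (hf : ContDiffOn ℝ (⊤ : ℕ∞) f U) (hu : u ∈ U) (i j : Fin N) :
    pd i (pd j f) u = pd j (pd i f) u := by
  have hf' : ContDiffOn ℝ (⊤ : ℕ∞) (fderiv ℝ f) U := hf.fderiv_of_isOpen hU (by simp)
  have hev : ∀ᶠ y in nhds u, HasFDerivAt f (fderiv ℝ f y) y := by
    filter_upwards [hU.mem_nhds hu] with y hy
    exact (diffAt_of_cdU hU hf hy).hasFDerivAt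
  have hx : HasFDerivAt (fderiv ℝ f) (fderiv ℝ (fderiv ℝ f) u) u :=
    (diffAt_of_cdU hU hf' hu).hasFDerivAt
  have hsymm := second_derivative_symmetric_of_eventually hev hx
  have key : ∀ p q : Fin N, pd p (pd q f) u
      = fderiv ℝ (fderiv ℝ f) u (Pi.single p 1) (Pi.single q 1) := by
    intro p q
    have h2 := (ContinuousLinearMap.apply ℝ E (Pi.single q (1:ℝ))).hasFDerivAt.comp u hx
    simp only [Function.comp_def, ContinuousLinearMap.apply_apply] at h2
    have hpq : pd q f = fun v => fderiv ℝ f v (Pi.single q 1) := rfl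
    show fderiv ℝ (pd q f) u (Pi.single p 1) = _
    rw [hpq, h2.fderiv]
    rfl
  rw [key i j, key j i, hsymm]

end helpers

section balg

variable {m : ℕ} {G : Matrix (Fin m) (Fin m) ℝ}

lemma Bform_comm (hG : G.transpose = G) (x y : Fin m → ℝ) :
    Bform G x y = Bform G y x := by
  unfold Bform
  rw [Finset.sum_comm]
  refine Finset.sum_congr rfl fun j _ => Finset.sum_congr rfl fun i _ => ?_
  have : G i j = G j i := by conv_lhs => rw [← hG, Matrix.transpose_apply]
  rw [this]; ring

lemma Bform_sum_left {ι : Type*} (s : Finset ι) (f : ι → Fin m → ℝ) (y : Fin m → ℝ) :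
    Bform G (∑ k ∈ s, f k) y = ∑ k ∈ s, Bform G (f k) y := by
  unfold Bform
  simp only [Finset.sum_apply, Finset.sum_mul]
  exact (Finset.sum_congr rfl fun i _ => Finset.sum_comm ..).trans (Finset.sum_comm ..)

lemma Bform_add_left (x x' y : Fin m → ℝ) :
    Bform G (x + x') y = Bform G x y + Bform G x' y := by
  unfold Bform
  rw [← Finset.sum_add_distrib]
  refine Finset.sum_congr rfl fun i _ => ?_
  rw [← Finset.sum_add_distrib]
  refine Finset.sum_congr rfl fun j _ => ?_
  simp only [Pi.add_apply]; ring

lemma Bform_smul_left (c : ℝ) (x y : Fin m → ℝ) :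
    Bform G (c • x) y = c * Bform G x y := by
  unfold Bform
  rw [Finset.mul_sum]
  refine Finset.sum_congr rfl fun i _ => ?_
  rw [Finset.mul_sum]
  refine Finset.sum_congr rfl fun j _ => ?_
  simp only [Pi.smul_apply, smul_eq_mul]; ring

end balg

lemma pd_apply_coord {N m : ℕ} {f : (Fin N → ℝ) → (Fin m → ℝ)} {u : Fin N → ℝ}
    (l : Fin N) (i : Fin m) : (pd l f u) i = (fderiv ℝ f u) (Pi.single l 1) i := rfl

lemma pd_Bform {N m : ℕ} (G : Matrix (Fin m) (Fin m) ℝ)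
    {f g : (Fin N → ℝ) → (Fin m → ℝ)} {u : Fin N → ℝ}
    (hf : DifferentiableAt ℝ f u) (hg : DifferentiableAt ℝ g u) (l : Fin N) :
    pd l (fun v => Bform G (f v) (g v)) u
      = Bform G (pd l f u) (g u) + Bform G (f u) (pd l g u) := by
  have hfi : ∀ i : Fin m, HasFDerivAt (fun v => f v i)
      ((ContinuousLinearMap.proj i).comp (fderiv ℝ f u)) u := fun i =>
    (ContinuousLinearMap.proj (R := ℝ) (φ := fun _ : Fin m => ℝ) i).hasFDerivAt.comp u
      hf.hasFDerivAt
  have hgj : ∀ j : Fin m, HasFDerivAt (fun v => g v j)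
      ((ContinuousLinearMap.proj j).comp (fderiv ℝ g u)) u := fun j =>
    (ContinuousLinearMap.proj (R := ℝ) (φ := fun _ : Fin m => ℝ) j).hasFDerivAt.comp u
      hg.hasFDerivAt
  have hterm : ∀ i j : Fin m, HasFDerivAt (fun v => f v i * G i j * g v j)
      ((f u i * G i j) • ((ContinuousLinearMap.proj j).comp (fderiv ℝ g u))
        + (g u j) • ((G i j) • ((ContinuousLinearMap.proj i).comp (fderiv ℝ f u)))) u :=
    fun i j => ((hfi i).mul_const (G i j)).mul (hgj j)
  have hsum : HasFDerivAt (fun v => ∑ i, ∑ j, f v i * G i j * g v j)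
      (∑ i, ∑ j, ((f u i * G i j) • ((ContinuousLinearMap.proj j).comp (fderiv ℝ g u))
        + (g u j) • ((G i j) • ((ContinuousLinearMap.proj i).comp (fderiv ℝ f u))))) u := by
    refine HasFDerivAt.fun_sum fun i _ => ?_
    exact HasFDerivAt.fun_sum fun j _ => hterm i j
  have hgoal : pd l (fun v => Bform G (f v) (g v)) u
      = (∑ i, ∑ j, ((f u i * G i j) • ((ContinuousLinearMap.proj j).comp (fderiv ℝ g u))
        + (g u j) • ((G i j) • ((ContinuousLinearMap.proj i).comp (fderiv ℝ f u)))))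
        (Pi.single l 1) := by
    show fderiv ℝ (fun v => Bform G (f v) (g v)) u (Pi.single l 1) = _
    have : (fun v => Bform G (f v) (g v)) = fun v => ∑ i, ∑ j, f v i * G i j * g v j := rfl
    rw [this, hsum.fderiv]
  rw [hgoal]
  simp only [ContinuousLinearMap.sum_apply, ContinuousLinearMap.add_apply,
    ContinuousLinearMap.smul_apply, ContinuousLinearMap.comp_apply,
    ContinuousLinearMap.proj_apply, smul_eq_mul]
  unfold Bform
  rw [← Finset.sum_add_distrib]
  refine Finset.sum_congr rfl fun i _ => ?_
  rw [← Finset.sum_add_distrib]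
  refine Finset.sum_congr rfl fun j _ => ?_
  rw [pd_apply_coord, pd_apply_coord]
  ring

lemma symm_anti_zero {α : Type*} (A : α → α → α → ℝ)
    (hsym : ∀ i j k, A i j k = A j i k) (hanti : ∀ i j k, A i j k = - A i k j)
    (i j k : α) : A i j k = 0 := by
  have h1 := hanti i j k
  have h2 := hsym i k j
  have h3 := hanti k i j
  have h4 := hsym k j i
  have h5 := hanti j k i
  have h6 := hsym j i k
  linarith

/-- `X^k_{ij}` is written `X i j k`. -/
theorem stmt16
    (N : ℕ) (hN : 1 ≤ N)
    (G : Matrix (Fin (2 * N)) (Fin (2 * N)) ℝ)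
    (hGsymm : G.transpose = G) (hGdet : G.det ≠ 0)
    (U : Set (Fin N → ℝ)) (hU : IsOpen U)
    (r n : (Fin N → ℝ) → (Fin (2 * N) → ℝ))
    (hr : ContDiffOn ℝ (⊤ : ℕ∞) r U) (hn : ContDiffOn ℝ (⊤ : ℕ∞) n U)
    (hbasis : ∀ u ∈ U,
      LinearIndependent ℝ (Sum.elim (fun i : Fin N => pd i r u) (fun j : Fin N => pd j n u)) ∧
      Submodule.span ℝ
        (Set.range (Sum.elim (fun i : Fin N => pd i r u) (fun j : Fin N => pd j n u))) = ⊤)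
    (horth : ∀ u ∈ U, ∀ i j : Fin N, Bform G (pd i r u) (pd j n u) = 0)
    -- flatness: h = η constant symmetric invertible, g = c₀ η
    (η : Matrix (Fin N) (Fin N) ℝ) (hηsymm : η.transpose = η) (hηdet : η.det ≠ 0)
    (c₀ : ℝ) (hc₀ : c₀ ≠ 0)
    (hflat_h : ∀ u ∈ U, ∀ i j : Fin N, Bform G (pd i n u) (pd j n u) = η i j)
    (hflat_g : ∀ u ∈ U, ∀ i j : Fin N, Bform G (pd i r u) (pd j r u) = c₀ * η i j)
    (a b c d : Fin N → Fin N → Fin N → (Fin N → ℝ) → ℝ)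
    (hsmooth : ∀ i j k : Fin N,
      ContDiffOn ℝ (⊤ : ℕ∞) (a i j k) U ∧ ContDiffOn ℝ (⊤ : ℕ∞) (b i j k) U ∧
      ContDiffOn ℝ (⊤ : ℕ∞) (c i j k) U ∧ ContDiffOn ℝ (⊤ : ℕ∞) (d i j k) U)
    (hGauss : ∀ u ∈ U, ∀ i j : Fin N,
      pd i (pd j r) u =
        (∑ k, a i j k u • pd k r u) + ∑ k, b i j k u • pd k n u)
    (hWeingarten : ∀ u ∈ U, ∀ i j : Fin N,
      pd i (pd j n) u =
        (∑ k, c i j k u • pd k r u) + ∑ k, d i j k u • pd k n u) :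
    -- the lowered tensor `b_{ijk} = Σ_s η_{ks} b^s_{ij}` is totally symmetric in
    -- `i,j,k`, and its first partial derivatives `∂_l b_{ijk}` are totally
    -- symmetric in all four indices `i,j,k,l` (the swaps below generate S₃ and S₄)
    ∀ u ∈ U, ∀ i j k l : Fin N,
      (∑ s, η k s * b i j s u) = (∑ s, η k s * b j i s u) ∧
      (∑ s, η k s * b i j s u) = (∑ s, η j s * b i k s u) ∧
      pd l (fun v => ∑ s, η k s * b i j s v) u =
        pd l (fun v => ∑ s, η k s * b j i s v) u ∧
      pd l (fun v => ∑ s, η k s * b i j s v) u =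
        pd l (fun v => ∑ s, η j s * b i k s v) u ∧
      pd l (fun v => ∑ s, η k s * b i j s v) u =
        pd k (fun v => ∑ s, η l s * b i j s v) u := by
  -- basic differentiability facts
  have dr1 : ∀ u ∈ U, ∀ i, DifferentiableAt ℝ (pd i r) u := fun u hu i =>
    diffAt_of_cdU hU (contDiffOn_pd hU hr i) hu
  have dn1 : ∀ u ∈ U, ∀ i, DifferentiableAt ℝ (pd i n) u := fun u hu i =>
    diffAt_of_cdU hU (contDiffOn_pd hU hn i) hu
  have dr2 : ∀ u ∈ U, ∀ i j, DifferentiableAt ℝ (pd i (pd j r)) u := fun u hu i j =>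
    diffAt_of_cdU hU (contDiffOn_pd hU (contDiffOn_pd hU hr j) i) hu
  have dn2 : ∀ u ∈ U, ∀ i j, DifferentiableAt ℝ (pd i (pd j n)) u := fun u hu i j =>
    diffAt_of_cdU hU (contDiffOn_pd hU (contDiffOn_pd hU hn j) i) hu
  -- derivative of the orthogonality relation
  have horthD : ∀ u ∈ U, ∀ i j k : Fin N, Bform G (pd i (pd j r) u) (pd k n u)
      = - Bform G (pd j r u) (pd i (pd k n) u) := by
    intro u hu i j k
    have h0 : pd i (fun v => Bform G (pd j r v) (pd k n v)) u = 0 :=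
      pd_constU hU (fun v hv => horth v hv j k) hu i
    have h1 := pd_Bform G (dr1 u hu j) (dn1 u hu k) i
    rw [h0] at h1
    linarith
  -- the tensor B(∂_i∂_j r, ∂_k r) vanishes
  have hA : ∀ u ∈ U, ∀ i j k : Fin N, Bform G (pd i (pd j r) u) (pd k r u) = 0 := by
    intro u hu
    refine symm_anti_zero (fun i j k => Bform G (pd i (pd j r) u) (pd k r u)) ?_ ?_
    · intro i j k; rw [pd_comm hU hr hu i j]
    · intro i j k
      have h0 : pd i (fun v => Bform G (pd j r v) (pd k r v)) u = 0 :=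
        pd_constU hU (fun v hv => hflat_g v hv j k) hu i
      have h1 := pd_Bform G (dr1 u hu j) (dr1 u hu k) i
      rw [h0] at h1
      have h2 : Bform G (pd j r u) (pd i (pd k r) u)
          = Bform G (pd i (pd k r) u) (pd j r u) := Bform_comm hGsymm _ _
      linarith
  -- the tensor B(∂_i∂_j n, ∂_k n) vanishes
  have hD : ∀ u ∈ U, ∀ i j k : Fin N, Bform G (pd i (pd j n) u) (pd k n u) = 0 := by
    intro u hu
    refine symm_anti_zero (fun i j k => Bform G (pd i (pd j n) u) (pd k n u)) ?_ ?_
    · intro i j k; rw [pd_comm hU hn hu i j]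
    · intro i j k
      have h0 : pd i (fun v => Bform G (pd j n v) (pd k n v)) u = 0 :=
        pd_constU hU (fun v hv => hflat_h v hv j k) hu i
      have h1 := pd_Bform G (dn1 u hu j) (dn1 u hu k) i
      rw [h0] at h1
      have h2 : Bform G (pd j n u) (pd i (pd k n) u)
          = Bform G (pd i (pd k n) u) (pd j n u) := Bform_comm hGsymm _ _
      linarith
  -- the coefficients a vanish
  have ha0 : ∀ u ∈ U, ∀ i j t : Fin N, a i j t u = 0 := by
    intro u hu i j t
    have hM : ∀ k : Fin N, (∑ s, a i j s u * η s k) = 0 := by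
      intro k
      have h1 := hA u hu i j k
      rw [hGauss u hu i j, Bform_add_left, Bform_sum_left, Bform_sum_left] at h1
      have e1 : ∀ s : Fin N, Bform G (a i j s u • pd s r u) (pd k r u)
          = a i j s u * (c₀ * η s k) := fun s => by
        rw [Bform_smul_left, hflat_g u hu s k]
      have e2 : ∀ s : Fin N, Bform G (b i j s u • pd s n u) (pd k r u) = 0 := fun s => by
        rw [Bform_smul_left, Bform_comm hGsymm, horth u hu k s, mul_zero]
      rw [Finset.sum_congr rfl fun s _ => e1 s, Finset.sum_congr rfl fun s _ => e2 s] at h1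
      have h2 : (∑ s, a i j s u * (c₀ * η s k)) = 0 := by simpa using h1
      have h3 : c₀ * (∑ s, a i j s u * η s k) = 0 := by
        rw [Finset.mul_sum, ← h2]
        exact Finset.sum_congr rfl fun s _ => by ring
      exact (mul_eq_zero.mp h3).resolve_left hc₀
    have hv : Matrix.vecMul (fun s => a i j s u) η = 0 := by
      funext k
      simpa [Matrix.vecMul, dotProduct] using hM k
    have hinv : η * η⁻¹ = 1 := Matrix.mul_nonsing_inv η (isUnit_iff_ne_zero.mpr hηdet)
    have h5 : Matrix.vecMul (Matrix.vecMul (fun s => a i j s u) η) η⁻¹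
        = Matrix.vecMul (0 : Fin N → ℝ) η⁻¹ := by rw [hv]
    rw [Matrix.vecMul_vecMul, hinv, Matrix.vecMul_one, Matrix.zero_vecMul] at h5
    exact congrFun h5 t
  -- the lowered tensor equals B(∂_i∂_j r, ∂_k n)
  have hF : ∀ u ∈ U, ∀ i j k : Fin N,
      Bform G (pd i (pd j r) u) (pd k n u) = ∑ s, η k s * b i j s u := by
    intro u hu i j k
    rw [hGauss u hu i j, Bform_add_left, Bform_sum_left, Bform_sum_left]
    have e1 : ∀ s : Fin N, Bform G (a i j s u • pd s r u) (pd k n u) = 0 := fun s => by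
      rw [Bform_smul_left, horth u hu s k, mul_zero]
    have e2 : ∀ s : Fin N, Bform G (b i j s u • pd s n u) (pd k n u)
        = η k s * b i j s u := fun s => by
      rw [Bform_smul_left, hflat_h u hu s k]
      have : η s k = η k s := by conv_lhs => rw [← hηsymm, Matrix.transpose_apply]
      rw [this]; ring
    rw [Finset.sum_congr rfl fun s _ => e1 s, Finset.sum_congr rfl fun s _ => e2 s]
    simp
  -- symmetry of the lowered tensor
  have hs12 : ∀ u ∈ U, ∀ i j k : Fin N,
      (∑ s, η k s * b i j s u) = (∑ s, η k s * b j i s u) := by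
    intro u hu i j k
    rw [← hF u hu i j k, ← hF u hu j i k, pd_comm hU hr hu i j]
  have hs13 : ∀ u ∈ U, ∀ i j k : Fin N,
      (∑ s, η k s * b i j s u) = (∑ s, η i s * b k j s u) := by
    intro u hu i j k
    rw [← hF u hu i j k, ← hF u hu k j i, horthD u hu i j k, horthD u hu k j i,
      pd_comm hU hn hu i k]
  have hs23 : ∀ u ∈ U, ∀ i j k : Fin N,
      (∑ s, η k s * b i j s u) = (∑ s, η j s * b i k s u) :=
    fun u hu i j k => (hs13 u hu i j k).trans ((hs12 u hu k j i).trans (hs13 u hu j k i))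
  -- B(∂_i∂_j r, ∂_l∂_k n) = 0
  have hzero : ∀ u ∈ U, ∀ i j l k : Fin N,
      Bform G (pd i (pd j r) u) (pd l (pd k n) u) = 0 := by
    intro u hu i j l k
    rw [hGauss u hu i j, Bform_add_left, Bform_sum_left, Bform_sum_left]
    have e1 : ∀ s : Fin N, Bform G (a i j s u • pd s r u) (pd l (pd k n) u) = 0 := fun s => by
      rw [Bform_smul_left, ha0 u hu i j s, zero_mul]
    have e2 : ∀ s : Fin N, Bform G (b i j s u • pd s n u) (pd l (pd k n) u) = 0 := fun s => by
      rw [Bform_smul_left, Bform_comm hGsymm, hD u hu l k s, mul_zero]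
    rw [Finset.sum_congr rfl fun s _ => e1 s, Finset.sum_congr rfl fun s _ => e2 s]
    simp
  -- the key formula for the derivative of the lowered tensor
  have hkey : ∀ u ∈ U, ∀ i j k l : Fin N,
      pd l (fun v => ∑ s, η k s * b i j s v) u
        = Bform G (pd l (pd i (pd j r)) u) (pd k n u) := by
    intro u hu i j k l
    have h1 : pd l (fun v => ∑ s, η k s * b i j s v) u
        = pd l (fun v => Bform G (pd i (pd j r) v) (pd k n v)) u :=
      pd_congrU hU (fun v hv => (hF v hv i j k).symm) hu l
    rw [h1, pd_Bform G (dr2 u hu i j) (dn1 u hu k) l, hzero u hu i j l k, add_zero]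
  -- conclusion
  intro u hu i j k l
  refine ⟨hs12 u hu i j k, hs23 u hu i j k,
    pd_congrU hU (fun v hv => hs12 v hv i j k) hu l,
    pd_congrU hU (fun v hv => hs23 v hv i j k) hu l, ?_⟩
  calc pd l (fun v => ∑ s, η k s * b i j s v) u
      = pd l (fun v => ∑ s, η i s * b k j s v) u :=
        pd_congrU hU (fun v hv => hs13 v hv i j k) hu l
    _ = Bform G (pd l (pd k (pd j r)) u) (pd i n u) := hkey u hu k j i l
    _ = Bform G (pd k (pd l (pd j r)) u) (pd i n u) := by
        rw [pd_comm hU (contDiffOn_pd hU hr j) hu l k]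
    _ = pd k (fun v => ∑ s, η i s * b l j s v) u := (hkey u hu l j i k).symm
    _ = pd k (fun v => ∑ s, η l s * b i j s v) u :=
        pd_congrU hU (fun v hv => hs13 v hv l j i) hu k
end
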